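/- arXiv:1110.3398 — 2 statements merged into one kernel-verified Lean document; each statement's English description precedes it below -/
import Mathlib

section
/- At an infection-free equilibrium (0, x₂*, 0, 0) of the HIV model with constant protease-inhibitor efficacy u₁ ∈ [0,1], if a₂x₂*·a₃a₄(1−u₁)·a₉ < (a₁ + a₂x₂*)(a₉ + a₆)a₄ then the Jacobian of the infected subsystem (x₁,x₃,x₄) restricted to the equilibrium has all leading principal minors of −J positive (Routh–Hurwitz type condition), hence (under the Routh–Hurwitz criterion for 3×3 matrices) all eigenvalues have negative real part. -/
/-!
The Jacobian has diagonal `-A, -D, -E` (with `A, D, E > 0`) and one cycle of off-diagonal gains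
`x₁ → x₃ → x₄ → x₁` with product `k ≥ 0`, so its characteristic polynomial is
`(z + A)(z + D)(z + E) - k`. At a root with `Re z ≥ 0` each factor has modulus at least its real
shift, giving `A D E ≤ k`, which the hypothesis `k < A D E` excludes. The leading principal minors
of `-J` are `A`, `A D` and `A D E - k`.
-/

open Matrix Polynomial

namespace Complex

theorem le_norm_add_ofReal {z : ℂ} (hz : 0 ≤ z.re) (w : ℝ) : w ≤ ‖z + w‖ :=
  calc w ≤ (z + w).re := by simpa using hz
    _ ≤ ‖z + w‖ := re_le_norm _

theorem re_neg_of_prod_add_ofReal_eq {ι : Type*} {s : Finset ι} {w : ι → ℝ}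
    (hw : ∀ i ∈ s, 0 ≤ w i) {z k : ℂ} (hz : ∏ i ∈ s, (z + w i) = k)
    (hk : ‖k‖ < ∏ i ∈ s, w i) : z.re < 0 := by
  by_contra! hre
  have hprod : ∏ i ∈ s, w i ≤ ‖k‖ := by
    rw [← hz, norm_prod]
    exact Finset.prod_le_prod hw fun i _ => le_norm_add_ofReal hre (w i)
  linarith

end Complex

section CyclicFeedback

variable {R : Type*} [CommRing R] (A D E b c e : R)

theorem eval_charpoly_map_cyclicFeedback {S : Type*} [CommRing S] (f : R →+* S) (z : S) :
    ((!![-A, 0, c; b, -D, 0; 0, e, -E] : Matrix (Fin 3) (Fin 3) R).map f).charpoly.eval z =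
      (z + f A) * (z + f D) * (z + f E) - f (b * c * e) := by
  rw [eval_charpoly, det_fin_three]
  simp only [scalar_apply, Fin.isValue, Matrix.sub_apply, diagonal_apply_eq, map_apply, of_apply,
    cons_val', cons_val_zero, cons_val_fin_one, map_neg, sub_neg_eq_add, cons_val_one, cons_val,
    ne_eq, Fin.reduceEq, not_false_eq_true, diagonal_apply_ne, map_zero, sub_self, mul_zero,
    zero_sub, mul_neg, zero_mul, neg_zero, sub_zero, add_zero, neg_mul, neg_neg, map_mul]
  ring

theorem det_submatrix_two_neg_cyclicFeedback :
    ((-!![-A, 0, c; b, -D, 0; 0, e, -E] : Matrix (Fin 3) (Fin 3) R).submatrix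
      (Fin.castLE (by norm_num)) (Fin.castLE (by norm_num)) : Matrix (Fin 2) (Fin 2) R).det =
        A * D := by
  simp [det_fin_two, Fin.castLE]

theorem det_neg_cyclicFeedback :
    (-!![-A, 0, c; b, -D, 0; 0, e, -E] : Matrix (Fin 3) (Fin 3) R).det = A * D * E - b * c * e := by
  rw [det_fin_three]
  simp only [Fin.isValue, Matrix.neg_apply, of_apply, cons_val', cons_val_zero, cons_val_fin_one,
    neg_neg, cons_val_one, cons_val, neg_zero, mul_zero, mul_neg, zero_mul, sub_zero, add_zero,
    neg_mul]
  ring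

end CyclicFeedback

theorem re_neg_of_isRoot_charpoly_cyclicFeedback {A D E b c e : ℝ} (hA : 0 < A) (hD : 0 < D)
    (hE : 0 < E) (hk : 0 ≤ b * c * e) (hlt : b * c * e < A * D * E) {z : ℂ}
    (hz : ((!![-A, 0, c; b, -D, 0; 0, e, -E] : Matrix (Fin 3) (Fin 3) ℝ).map
      (algebraMap ℝ ℂ)).charpoly.IsRoot z) : z.re < 0 := by
  rw [IsRoot, eval_charpoly_map_cyclicFeedback, sub_eq_zero] at hz
  refine Complex.re_neg_of_prod_add_ofReal_eq (s := Finset.univ) (w := ![A, D, E])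
    (k := ((b * c * e : ℝ) : ℂ)) (fun i _ => ?_) ?_ ?_
  · fin_cases i <;> simp [hA.le, hD.le, hE.le]
  · simpa [Fin.prod_univ_three] using hz
  · rw [Complex.norm_real, Real.norm_of_nonneg hk]
    simpa [Fin.prod_univ_three] using hlt

/-- Routh–Hurwitz-type stability of the infection-free equilibrium.
If a₂x₂*·a₃a₄(1−u₁)·a₉ < (a₁+a₂x₂*)(a₉+a₆)a₄ then all leading principal minors
of −J are positive, and all eigenvalues of J (roots of its char. polynomial over ℂ)
have negative real part. -/
theorem hiv_infection_free_stability
    (a1 a2 a3 a4 a6 a9 : ℝ) (ha1 : 0 < a1) (ha2 : 0 < a2) (ha3 : 0 < a3)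
    (ha4 : 0 < a4) (ha6 : 0 < a6) (ha9 : 0 < a9)
    (x2star : ℝ) (hx2 : 0 < x2star) (u1 : ℝ) (hu1 : u1 ∈ Set.Icc (0 : ℝ) 1)
    (J : Matrix (Fin 3) (Fin 3) ℝ)
    (hJ : J = !![-a1 - a2 * x2star, 0, a3 * a4 * (1 - u1);
                 a2 * x2star, -(a9 + a6), 0;
                 0, a9, -a4])
    (hcond : a2 * x2star * (a3 * a4 * (1 - u1)) * a9 <
      (a1 + a2 * x2star) * (a9 + a6) * a4) :
    (0 < (-J) 0 0 ∧
      0 < Matrix.det ((-J).submatrix (Fin.castLE (by norm_num)) (Fin.castLE (by norm_num)) :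
        Matrix (Fin 2) (Fin 2) ℝ) ∧
      0 < Matrix.det (-J)) ∧
    (∀ z : ℂ, (Matrix.charpoly (J.map (algebraMap ℝ ℂ))).IsRoot z → z.re < 0) := by
  rw [← neg_add'] at hJ
  subst hJ
  have hA : 0 < a1 + a2 * x2star := by positivity
  have hD : 0 < a9 + a6 := by positivity
  have hk : 0 ≤ a2 * x2star * (a3 * a4 * (1 - u1)) * a9 := by
    have : 0 ≤ 1 - u1 := sub_nonneg.mpr hu1.2
    positivity
  refine ⟨⟨by simpa using hA, ?_, ?_⟩, fun z hz => ?_⟩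
  · rw [det_submatrix_two_neg_cyclicFeedback]
    positivity
  · rw [det_neg_cyclicFeedback]
    linarith
  · exact re_neg_of_isRoot_charpoly_cyclicFeedback hA hD ha4 hk hcond hz
end

section
/- The nonnegative orthant ℝ⁴₊ is positively invariant for the HIV model: if the initial state x(0) has all components nonnegative and x is a solution of the ODE system with measurable controls u₁,u₂,u₃,u₄ taking values in [0,1], then all components of x(t) remain nonnegative for all t ≥ 0 in the interval of existence. -/
/-!
Along a solution, `g = Σᵢ (min xᵢ 0)²` is differentiable with `g' = Σᵢ 2 (min xᵢ 0) ẋᵢ`, and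
`g 0 = 0`. Each equation has the form `ẋᵢ = -cᵢ xᵢ + bᵢ`, where `cᵢ` is bounded below on `[0, T]`
(the states are continuous, hence bounded) and `bᵢ ≥ L Σⱼ min xⱼ 0`: the sources are nonnegative
up to the negative parts of the states. The one exception is `a₅ / (1 + x₁)`, which has the right
sign only while `x₁ > -1`, i.e. while `g` is small. There `g' ≤ K g`, so Gronwall's inequality
propagates `g = 0` from `t = 0` to all of `[0, T]`.
-/

open Set Filter Topology Asymptotics

theorem hasDerivAt_min_zero_sq (y : ℝ) :
    HasDerivAt (fun z => min z 0 ^ 2) (2 * min y 0) y := by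
  rcases lt_trichotomy y 0 with hy | rfl | hy
  · have hfun : (fun z => min z 0 ^ 2) =ᶠ[𝓝 y] fun z => z ^ 2 := by
      filter_upwards [eventually_lt_nhds hy] with z hz
      rw [min_eq_left hz.le]
    rw [min_eq_left hy.le]
    simpa using (hasDerivAt_pow 2 y).congr_of_eventuallyEq hfun
  · rw [hasDerivAt_iff_isLittleO]
    simp only [min_self, sub_zero, mul_zero, smul_zero, ne_eq, OfNat.ofNat_ne_zero,
      not_false_eq_true, zero_pow]
    refine (isBigO_of_le _ fun z => ?_).trans_isLittleO (isLittleO_pow_id one_lt_two)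
    rcases le_total z 0 with hz | hz <;> simp [hz]
  · have hfun : (fun z => min z 0 ^ 2) =ᶠ[𝓝 y] fun _ => 0 := by
      filter_upwards [eventually_gt_nhds hy] with z hz
      simp [min_eq_right hz.le]
    rw [min_eq_right hy.le, mul_zero]
    exact (hasDerivAt_const y 0).congr_of_eventuallyEq hfun

theorem eq_zero_of_deriv_right_le_mul_near_zero {g g' : ℝ → ℝ} {a b K δ : ℝ}
    (hg : ContinuousOn g (Icc a b)) (hg' : ∀ t ∈ Ico a b, HasDerivWithinAt g (g' t) (Ici t) t)
    (hg_nonneg : ∀ t ∈ Icc a b, 0 ≤ g t) (ha : g a = 0) (hδ : 0 < δ)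
    (bound : ∀ t ∈ Ico a b, g t < δ → g' t ≤ K * g t) :
    ∀ t ∈ Icc a b, g t = 0 := by
  have hclosed : IsClosed ({t | g t = 0} ∩ Icc a b) := by
    rw [inter_comm]
    exact hg.preimage_isClosed_of_isClosed isClosed_Icc isClosed_singleton
  refine fun t ht => hclosed.Icc_subset_of_forall_mem_nhdsWithin ha ?_ ht
  rintro x ⟨hx0 : g x = 0, hx⟩
  -- To the right of a zero `x`, `g < δ` on some `[x, c]`, and there Gronwall forces `g = 0`.
  have hsmall : ∀ᶠ t in 𝓝[≥] x, g t < δ ∧ t ∈ Icc a b :=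
    (((hg x (Ico_subset_Icc_self hx)).eventually_lt_const (hx0 ▸ hδ)).and
      self_mem_nhdsWithin).filter_mono (nhdsWithin_le_of_mem (Icc_mem_nhdsGE_of_mem hx))
  obtain ⟨c, hxc, hsub⟩ := mem_nhdsGE_iff_exists_Icc_subset.mp hsmall
  have hcb : c ≤ b := (hsub (right_mem_Icc.2 hxc.le)).2.2
  have hle := le_gronwallBound_of_liminf_deriv_right_le (ε := 0)
    (hg.mono (Icc_subset_Icc hx.1 hcb))
    (fun t ht _ hr => (hg' t (Ico_subset_Ico hx.1 hcb ht)).liminf_right_slope_le hr) hx0.le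
    (fun t ht => by
      simpa using bound t (Ico_subset_Ico hx.1 hcb ht) (hsub (Ico_subset_Icc_self ht)).1)
  refine mem_of_superset (Ioo_mem_nhdsGT hxc) fun t ht => ?_
  have ht' := Ioo_subset_Icc_self ht
  exact le_antisymm (by simpa [gronwallBound_ε0_δ0] using hle t ht')
    (hg_nonneg t (Icc_subset_Icc hx.1 hcb ht'))

theorem two_mul_min_zero_mul_le {y c b s C : ℝ} (hc : -C ≤ c) (hb : s ≤ b) :
    2 * min y 0 * (-c * y + b) ≤ 2 * C * min y 0 ^ 2 + 2 * min y 0 * s := by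
  rcases le_total y 0 with hy | hy
  · rw [min_eq_left hy]
    nlinarith [mul_le_mul_of_nonpos_left hb hy,
      mul_nonneg (sq_nonneg y) (neg_le_iff_add_nonneg.mp hc)]
  · simp [min_eq_right hy]

theorem sum_two_mul_min_zero_mul_le {ι : Type*} [Fintype ι] {y c b : ι → ℝ} {C L : ℝ}
    (hL : 0 ≤ L) (hc : ∀ i, -C ≤ c i) (hb : ∀ i, L * ∑ j, min (y j) 0 ≤ b i) :
    ∑ i, 2 * min (y i) 0 * (-c i * y i + b i) ≤
      (2 * C + 2 * Fintype.card ι * L) * ∑ i, min (y i) 0 ^ 2 := by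
  set s := ∑ j, min (y j) 0
  have hs : s ^ 2 ≤ Fintype.card ι * ∑ i, min (y i) 0 ^ 2 := by
    simpa using sq_sum_le_card_mul_sum_sq (s := Finset.univ) (f := fun j => min (y j) 0)
  calc ∑ i, 2 * min (y i) 0 * (-c i * y i + b i)
      ≤ ∑ i, (2 * C * min (y i) 0 ^ 2 + 2 * min (y i) 0 * (L * s)) :=
        Finset.sum_le_sum fun i _ => two_mul_min_zero_mul_le (hc i) (hb i)
    _ = 2 * C * ∑ i, min (y i) 0 ^ 2 + 2 * L * s ^ 2 := by
        rw [Finset.sum_add_distrib, ← Finset.mul_sum, ← Finset.sum_mul, ← Finset.mul_sum]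
        ring
    _ ≤ _ := by nlinarith [mul_le_mul_of_nonneg_left hs hL]

theorem forall_nonneg_of_hasDerivAt_neg_mul_add {ι : Type*} [Fintype ι] {x c b : ι → ℝ → ℝ}
    {t₀ T C L δ : ℝ} (hx : ∀ i, ∀ t ∈ Icc t₀ T, HasDerivAt (x i) (-c i t * x i t + b i t) t)
    (hx₀ : ∀ i, 0 ≤ x i t₀) (hδ : 0 < δ) (hL : 0 ≤ L) (hc : ∀ t ∈ Icc t₀ T, ∀ i, -C ≤ c i t)
    (hb : ∀ t ∈ Icc t₀ T, ∑ j, min (x j t) 0 ^ 2 < δ → ∀ i, L * ∑ j, min (x j t) 0 ≤ b i t) :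
    ∀ t ∈ Icc t₀ T, ∀ i, 0 ≤ x i t := by
  set g := fun t => ∑ i, min (x i t) 0 ^ 2
  have hg : ∀ t ∈ Icc t₀ T,
      HasDerivAt g (∑ i, 2 * min (x i t) 0 * (-c i t * x i t + b i t)) t := fun t ht =>
    HasDerivAt.fun_sum fun i _ => (hasDerivAt_min_zero_sq _).comp t (hx i t ht)
  have hg_zero := eq_zero_of_deriv_right_le_mul_near_zero
    (fun t ht => (hg t ht).continuousAt.continuousWithinAt)
    (fun t ht => (hg t (Ico_subset_Icc_self ht)).hasDerivWithinAt)
    (fun t _ => by positivity) (by simp [g, hx₀]) hδ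
    (fun t ht hgt => sum_two_mul_min_zero_mul_le hL (hc t (Ico_subset_Icc_self ht))
      (hb t (Ico_subset_Icc_self ht) hgt))
  intro t ht i
  have := (Finset.sum_eq_zero_iff_of_nonneg fun i _ => sq_nonneg _).mp (hg_zero t ht) i
    (Finset.mem_univ i)
  simpa using this

theorem IsCompact.exists_forall_abs_le_of_continuousOn {α ι : Type*} [TopologicalSpace α]
    [Fintype ι] {s : Set α} (hs : IsCompact s) {f : ι → α → ℝ}
    (hf : ∀ i, ContinuousOn (f i) s) : ∃ M, ∀ t ∈ s, ∀ i, |f i t| ≤ M := by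
  obtain ⟨M, hM⟩ := hs.exists_bound_of_continuousOn (continuousOn_pi.2 hf)
  exact ⟨M, fun t ht i => (norm_le_pi_norm (fun i => f i t) i).trans (hM t ht)⟩

theorem abs_mul_le_of_abs_le {v w M : ℝ} (hv : |v| ≤ M) (hw : w ∈ Icc (0 : ℝ) 1) :
    |v * w| ≤ M := by
  rw [abs_mul]
  exact (mul_le_of_le_one_right (abs_nonneg v) (abs_le.2 ⟨by linarith [hw.1], hw.2⟩)).trans hv

theorem min_zero_le_mul {v w : ℝ} (hw : w ∈ Icc (0 : ℝ) 1) : min v 0 ≤ v * w := by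
  rcases le_total v 0 with hv | hv
  · rw [min_eq_left hv]
    nlinarith [hw.2]
  · rw [min_eq_right hv]
    exact mul_nonneg hv hw.1

theorem mul_add_min_zero_le_mul_mul {v1 v2 w M : ℝ} (h1 : |v1| ≤ M) (h2 : |v2| ≤ M)
    (hw : w ∈ Icc (0 : ℝ) 1) : M * (min v1 0 + min v2 0) ≤ v1 * v2 * w := by
  have hM : 0 ≤ M := (abs_nonneg v1).trans h1
  rcases le_total v1 0 with hv1 | hv1 <;> rcases le_total v2 0 with hv2 | hv2
  · rw [min_eq_left hv1, min_eq_left hv2]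
    nlinarith [mul_nonneg (mul_nonneg_of_nonpos_of_nonpos hv1 hv2) hw.1]
  · rw [min_eq_left hv1, min_eq_right hv2, mul_assoc]
    nlinarith [mul_le_mul_of_nonpos_left (abs_le.1 (abs_mul_le_of_abs_le h2 hw)).2 hv1]
  · rw [min_eq_right hv1, min_eq_left hv2, mul_right_comm]
    nlinarith [mul_le_mul_of_nonpos_right (abs_le.1 (abs_mul_le_of_abs_le h1 hw)).2 hv2]
  · rw [min_eq_right hv1, min_eq_right hv2]
    nlinarith [mul_nonneg (mul_nonneg hv1 hv2) hw.1]

theorem logistic_factor_le {v2 v3 v4 w M a8 : ℝ} (ha8 : 0 < a8) (h2 : |v2| ≤ M)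
    (h3 : |v3| ≤ M) (h4 : |v4| ≤ M) (hw : w ∈ Icc (0 : ℝ) 1) :
    (1 - (v2 + v3 + v4) / a8) * (1 + w) ≤ 2 * (1 + 3 * M / a8) := by
  have hq : 1 - (v2 + v3 + v4) / a8 ≤ 1 + 3 * M / a8 := by
    rw [sub_eq_add_neg, ← neg_div]
    gcongr
    linarith [abs_le.mp h2, abs_le.mp h3, abs_le.mp h4]
  have hq0 : 0 ≤ 1 + 3 * M / a8 := by
    have := (abs_nonneg v2).trans h2
    positivity
  nlinarith [hw.1, hw.2]

theorem mul_le_mul_of_le_of_le_of_nonpos {L ℓ s m : ℝ} (hs : s ≤ 0) (hsm : s ≤ m)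
    (hℓ : 0 ≤ ℓ) (hℓL : ℓ ≤ L) : L * s ≤ ℓ * m :=
  (mul_le_mul_of_nonpos_right hℓL hs).trans (mul_le_mul_of_nonneg_left hsm hℓ)

section HIV

variable {a1 a2 a3 a4 a5 a6 a7 a8 a9 M v1 v2 v3 v4 w1 w2 w3 w4 : ℝ}

theorem hiv_decay_ge (ha1 : 0 < a1) (ha2 : 0 < a2) (ha4 : 0 < a4) (ha6 : 0 < a6)
    (ha7 : 0 < a7) (ha8 : 0 < a8) (ha9 : 0 < a9) (hv : ∀ j, |![v1, v2, v3, v4] j| ≤ M)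
    (hw2 : w2 ∈ Icc (0 : ℝ) 1) (hw3 : w3 ∈ Icc (0 : ℝ) 1) (hw4 : w4 ∈ Icc (0 : ℝ) 1)
    (i : Fin 4) :
    -(a2 * M + 2 * a7 * (1 + 3 * M / a8)) ≤
      ![a1 + a2 * v2 * (1 - w2),
        a2 * v1 * (1 - w2) * (1 - w4) + a6 - a7 * (1 - (v2 + v3 + v4) / a8) * (1 + w3),
        a9 + a6, a4] i := by
  have h1 : |v1| ≤ M := hv 0
  have h2 : |v2| ≤ M := hv 1
  have h3 : |v3| ≤ M := hv 2
  have h4 : |v4| ≤ M := hv 3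
  have hM : 0 ≤ M := (abs_nonneg v1).trans h1
  have haM : 0 ≤ a2 * M := by positivity
  have ha7M : 0 ≤ a7 * (1 + 3 * M / a8) := by positivity
  fin_cases i <;> simp only [Fin.reduceFinMk, Matrix.cons_val, Fin.zero_eta, Fin.mk_one]
  · have := neg_le_of_abs_le (abs_mul_le_of_abs_le h2 (Icc.mem_iff_one_sub_mem.mp hw2))
    linarith [mul_le_mul_of_nonneg_left this ha2.le]
  · have := neg_le_of_abs_le (abs_mul_le_of_abs_le h1
      (unitInterval.mul_mem (Icc.mem_iff_one_sub_mem.mp hw2) (Icc.mem_iff_one_sub_mem.mp hw4)))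
    have hlog := logistic_factor_le ha8 h2 h3 h4 hw3
    linarith [mul_le_mul_of_nonneg_left this ha2.le, mul_le_mul_of_nonneg_left hlog ha7.le]
  · linarith
  · linarith

theorem hiv_source_ge (ha2 : 0 < a2) (ha3 : 0 < a3) (ha4 : 0 < a4) (ha5 : 0 < a5)
    (ha9 : 0 < a9) (hv : ∀ j, |![v1, v2, v3, v4] j| ≤ M)
    (hw1 : w1 ∈ Icc (0 : ℝ) 1) (hw2 : w2 ∈ Icc (0 : ℝ) 1) (hw4 : w4 ∈ Icc (0 : ℝ) 1)
    (hsmall : ∑ j, min (![v1, v2, v3, v4] j) 0 ^ 2 < 1) (i : Fin 4) :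
    (a3 * a4 + a2 * M + a9) * ∑ j, min (![v1, v2, v3, v4] j) 0 ≤
      ![a3 * a4 * v4 * (1 - w1), a5 / (1 + v1), a2 * v1 * v2 * (1 - w2) * (1 - w4), a9 * v3] i := by
  have h1 : |v1| ≤ M := hv 0
  have h2 : |v2| ≤ M := hv 1
  have hM : 0 ≤ M := (abs_nonneg v1).trans h1
  have haM : 0 ≤ a2 * M := by positivity
  have ha34 : 0 < a3 * a4 := mul_pos ha3 ha4
  simp only [Matrix.cons_val, Fin.sum_univ_four] at hsmall ⊢
  have hm1 := min_le_right v1 0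
  have hm2 := min_le_right v2 0
  have hm3 := min_le_right v3 0
  have hm4 := min_le_right v4 0
  have hs : min v1 0 + min v2 0 + min v3 0 + min v4 0 ≤ 0 := by linarith
  fin_cases i <;> simp only [Fin.reduceFinMk, Matrix.cons_val, Fin.zero_eta, Fin.mk_one]
  · refine (mul_le_mul_of_le_of_le_of_nonpos (ℓ := a3 * a4) (m := min v4 0) hs (by linarith)
      ha34.le (by linarith)).trans ?_
    linarith [mul_le_mul_of_nonneg_left
      (min_zero_le_mul (v := v4) (Icc.mem_iff_one_sub_mem.mp hw1)) ha34.le]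
  · have hv1 : -1 < v1 := by
      have : min v1 0 ^ 2 < 1 := by
        nlinarith [sq_nonneg (min v2 0), sq_nonneg (min v3 0), sq_nonneg (min v4 0)]
      linarith [(abs_lt.1 ((sq_lt_one_iff_abs_lt_one _).1 this)).1, min_le_left v1 0]
    exact (mul_nonpos_of_nonneg_of_nonpos (by positivity) hs).trans
      (div_nonneg ha5.le (by linarith))
  · refine (mul_le_mul_of_le_of_le_of_nonpos (ℓ := a2 * M) (m := min v1 0 + min v2 0) hs
      (by linarith) haM (by linarith)).trans ?_
    linarith [mul_le_mul_of_nonneg_left (mul_add_min_zero_le_mul_mul h1 h2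
      (unitInterval.mul_mem (Icc.mem_iff_one_sub_mem.mp hw2) (Icc.mem_iff_one_sub_mem.mp hw4)))
      ha2.le]
  · refine (mul_le_mul_of_le_of_le_of_nonpos (ℓ := a9) (m := min v3 0) hs (by linarith) ha9.le
      (by linarith)).trans ?_
    exact mul_le_mul_of_nonneg_left (min_le_left v3 0) ha9.le

end HIV

theorem hiv_nonneg_orthant_invariant_general
    (a1 a2 a3 a4 a5 a6 a7 a8 a9 : ℝ)
    (ha1 : 0 < a1) (ha2 : 0 < a2) (ha3 : 0 < a3) (ha4 : 0 < a4) (ha5 : 0 < a5)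
    (ha6 : 0 < a6) (ha7 : 0 < a7) (ha8 : 0 < a8) (ha9 : 0 < a9)
    (T : ℝ) (hT : 0 ≤ T)
    (x1 x2 x3 x4 u1 u2 u3 u4 : ℝ → ℝ)
    (hu1 : ∀ t, u1 t ∈ Icc (0 : ℝ) 1) (hu2 : ∀ t, u2 t ∈ Icc (0 : ℝ) 1)
    (hu3 : ∀ t, u3 t ∈ Icc (0 : ℝ) 1) (hu4 : ∀ t, u4 t ∈ Icc (0 : ℝ) 1)
    (hx1 : ∀ t ∈ Icc 0 T, HasDerivAt x1
      (-a1 * x1 t - a2 * x1 t * x2 t * (1 - u2 t) + a3 * a4 * x4 t * (1 - u1 t)) t)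
    (hx2 : ∀ t ∈ Icc 0 T, HasDerivAt x2
      (a5 / (1 + x1 t) - a2 * x1 t * x2 t * (1 - u2 t) * (1 - u4 t) - a6 * x2 t
        + a7 * (1 - (x2 t + x3 t + x4 t) / a8) * x2 t * (1 + u3 t)) t)
    (hx3 : ∀ t ∈ Icc 0 T, HasDerivAt x3
      (a2 * x1 t * x2 t * (1 - u2 t) * (1 - u4 t) - a9 * x3 t - a6 * x3 t) t)
    (hx4 : ∀ t ∈ Icc 0 T, HasDerivAt x4 (a9 * x3 t - a4 * x4 t) t)
    (h10 : 0 ≤ x1 0) (h20 : 0 ≤ x2 0) (h30 : 0 ≤ x3 0) (h40 : 0 ≤ x4 0) :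
    ∀ t ∈ Icc 0 T, 0 ≤ x1 t ∧ 0 ≤ x2 t ∧ 0 ≤ x3 t ∧ 0 ≤ x4 t := by
  set x : Fin 4 → ℝ → ℝ := fun i t => ![x1 t, x2 t, x3 t, x4 t] i
  set c : Fin 4 → ℝ → ℝ := fun i t => ![a1 + a2 * x2 t * (1 - u2 t),
    a2 * x1 t * (1 - u2 t) * (1 - u4 t) + a6 - a7 * (1 - (x2 t + x3 t + x4 t) / a8) * (1 + u3 t),
    a9 + a6, a4] i
  set b : Fin 4 → ℝ → ℝ := fun i t => ![a3 * a4 * x4 t * (1 - u1 t), a5 / (1 + x1 t),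
    a2 * x1 t * x2 t * (1 - u2 t) * (1 - u4 t), a9 * x3 t] i
  have hx : ∀ i, ∀ t ∈ Icc 0 T, HasDerivAt (x i) (-c i t * x i t + b i t) t := by
    intro i t ht
    fin_cases i <;> simp only [x, c, b, Fin.reduceFinMk, Matrix.cons_val, Fin.zero_eta, Fin.mk_one]
    exacts [(hx1 t ht).congr_deriv (by ring), (hx2 t ht).congr_deriv (by ring),
      (hx3 t ht).congr_deriv (by ring), (hx4 t ht).congr_deriv (by ring)]
  obtain ⟨M, hM⟩ := isCompact_Icc.exists_forall_abs_le_of_continuousOn fun i =>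
    continuousOn_of_forall_continuousAt fun t ht => (hx i t ht).continuousAt
  have hM0 : 0 ≤ M := (abs_nonneg _).trans (hM 0 ⟨le_rfl, hT⟩ 0)
  have key := forall_nonneg_of_hasDerivAt_neg_mul_add hx
    (fun i => by fin_cases i; exacts [h10, h20, h30, h40]) one_pos
    (by positivity : 0 ≤ a3 * a4 + a2 * M + a9)
    (fun t ht => hiv_decay_ge ha1 ha2 ha4 ha6 ha7 ha8 ha9 (hM t ht) (hu2 t) (hu3 t) (hu4 t))
    (fun t ht hsmall => hiv_source_ge ha2 ha3 ha4 ha5 ha9 (hM t ht) (hu1 t) (hu2 t) (hu4 t) hsmall)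
  exact fun t ht => ⟨key t ht 0, key t ht 1, key t ht 2, key t ht 3⟩

/-- Positive invariance of the nonnegative orthant for the HIV model:
nonnegative initial data and measurable controls with values in [0,1] give
nonnegative states on the interval of existence [0,T]. -/
theorem hiv_nonneg_orthant_invariant
    (a1 a2 a3 a4 a5 a6 a7 a8 a9 : ℝ)
    (ha1 : 0 < a1) (ha2 : 0 < a2) (ha3 : 0 < a3) (ha4 : 0 < a4) (ha5 : 0 < a5)
    (ha6 : 0 < a6) (ha7 : 0 < a7) (ha8 : 0 < a8) (ha9 : 0 < a9)
    (T : ℝ) (hT : 0 ≤ T)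
    (x1 x2 x3 x4 u1 u2 u3 u4 : ℝ → ℝ)
    (hu1m : Measurable u1) (hu2m : Measurable u2) (hu3m : Measurable u3)
    (hu4m : Measurable u4)
    (hu1 : ∀ t, u1 t ∈ Icc (0 : ℝ) 1) (hu2 : ∀ t, u2 t ∈ Icc (0 : ℝ) 1)
    (hu3 : ∀ t, u3 t ∈ Icc (0 : ℝ) 1) (hu4 : ∀ t, u4 t ∈ Icc (0 : ℝ) 1)
    (hx1 : ∀ t ∈ Icc 0 T, HasDerivAt x1
      (-a1 * x1 t - a2 * x1 t * x2 t * (1 - u2 t) + a3 * a4 * x4 t * (1 - u1 t)) t)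
    (hx2 : ∀ t ∈ Icc 0 T, HasDerivAt x2
      (a5 / (1 + x1 t) - a2 * x1 t * x2 t * (1 - u2 t) * (1 - u4 t) - a6 * x2 t
        + a7 * (1 - (x2 t + x3 t + x4 t) / a8) * x2 t * (1 + u3 t)) t)
    (hx3 : ∀ t ∈ Icc 0 T, HasDerivAt x3
      (a2 * x1 t * x2 t * (1 - u2 t) * (1 - u4 t) - a9 * x3 t - a6 * x3 t) t)
    (hx4 : ∀ t ∈ Icc 0 T, HasDerivAt x4 (a9 * x3 t - a4 * x4 t) t)
    (h10 : 0 ≤ x1 0) (h20 : 0 ≤ x2 0) (h30 : 0 ≤ x3 0) (h40 : 0 ≤ x4 0) :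
    ∀ t ∈ Icc 0 T, 0 ≤ x1 t ∧ 0 ≤ x2 t ∧ 0 ≤ x3 t ∧ 0 ≤ x4 t :=
  hiv_nonneg_orthant_invariant_general a1 a2 a3 a4 a5 a6 a7 a8 a9 ha1 ha2 ha3 ha4 ha5 ha6 ha7 ha8
    ha9 T hT x1 x2 x3 x4 u1 u2 u3 u4 hu1 hu2 hu3 hu4 hx1 hx2 hx3 hx4 h10 h20 h30 h40
end
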